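/- arXiv:2310.11734 — 3 statements merged into one kernel-verified Lean document; each statement's English description precedes it below -/
import Mathlib

section
/- Let {P_n} be the Brenke polynomial sequence associated with (a_k) and (b_k). If {P_n} is 2-orthogonal, then for every n ≥ 3: (−a_1⁴ − 2a_1a_3 + 3a_1²a_2 − a_2² + a_4)·Δ_n + (a_1²a_2 − a_2² − a_1a_3 + a_4)·Δ_{n−1} + (a_4 − a_1a_3)·Δ_{n−2} + a_4·Δ_{n−3} = 0, and moreover (a_1³ − 2a_1a_2 + a_3)·Δ_n + (a_3 − a_1a_2)·Δ_{n−1} + a_3·Δ_{n−2} ≠ 0. -/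
/-!
A `2`-orthogonal sequence satisfies a four-term recurrence
`x Pₙ = αₙ Pₙ₊₁ + βₙ Pₙ + γₙ Pₙ₋₁ + δₙ Pₙ₋₂` with `δₙ ≠ 0`: expand `x Pₙ` in the basis `(Pⱼ)`;
applying `u_k (x^m ·)` with `2m + k = j` isolates the coefficient of `Pⱼ` once the lower ones are
known to vanish, which kills every coefficient below `Pₙ₋₂` by induction and, at `j = n - 2`,
shows that `δₙ ≠ 0`. For a Brenke sequence the coefficient of `x^j` in `x Pₙ` is `r_{j-1}` times
that in `Pₙ₊₁`, so comparing the coefficients of `x^{n+1}, …, x^{n-3}` gives five linear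
equations: the first four determine `αₙ, …, δₙ` from the `a_i` and `r_j`, the fifth is the
stated relation, and the stated nonvanishing expression is `-δₙ`.
-/

open Finset Polynomial

section DOrthogonal

variable {K : Type*} [Field K] {d : ℕ}

def IsDOrthogonal (u : Fin d → K[X] →ₗ[K] K) (P : ℕ → K[X]) : Prop :=
  ∀ k : Fin d, (∀ m n : ℕ, m * d + k < n → u k (X ^ m * P n) = 0) ∧
    ∀ m : ℕ, u k (X ^ m * P (m * d + k)) ≠ 0

theorem Polynomial.Sequence.exists_eq_sum_smul (S : Sequence K) {q : K[X]} {N : ℕ}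
    (hq : q.natDegree ≤ N) : ∃ c : ℕ → K, q = ∑ j ∈ range (N + 1), c j • S j := by
  have hmem : q ∈ Submodule.span K (S '' ↑(range (N + 1))) := by
    rw [coe_range, S.span_degreeLT fun i _ ↦ by simp, mem_degreeLT]
    exact (degree_le_of_natDegree_le hq).trans_lt (WithBot.coe_lt_coe.mpr N.lt_succ_self)
  obtain ⟨c, hc⟩ := (Submodule.mem_span_image_finset_iff_exists_fun' K).mp hmem
  exact ⟨c, hc.symm⟩

namespace IsDOrthogonal

variable {u : Fin d → K[X] →ₗ[K] K} {P : ℕ → K[X]}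

theorem apply_X_pow_mul_sum (hu : IsDOrthogonal u P) {k : Fin d} {m M : ℕ} {e : ℕ → K}
    (hM : m * d + k < M) (he : ∀ i < m * d + k, e i = 0) :
    u k (X ^ m * ∑ i ∈ range M, e i • P i) = e (m * d + k) * u k (X ^ m * P (m * d + k)) := by
  simp only [mul_sum, mul_smul_comm, map_sum, map_smul, smul_eq_mul]
  refine sum_eq_single_of_mem _ (mem_range.mpr hM) fun i _ hi ↦ ?_
  rcases hi.lt_or_gt with hi | hi
  · rw [he i hi, zero_mul]
  · rw [(hu k).1 m i hi, mul_zero]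

theorem exists_X_mul_eq_sum {S : Sequence K} (hu : IsDOrthogonal u S) (hd : 0 < d) (N : ℕ) :
    ∃ e : ℕ → K, X * S (N + d) = ∑ j ∈ Ico N (N + d + 2), e j • S j ∧ e N ≠ 0 := by
  obtain ⟨e, he⟩ := S.exists_eq_sum_smul (q := X * S (N + d)) (N := N + d + 1)
    (by simp [S.ne_zero])
  have hpair : ∀ j ≤ N, (∀ i < j, e i = 0) → ∃ k : Fin d, ∃ m, m * d + k = j ∧
      u k (X ^ (m + 1) * S (N + d)) = e j * u k (X ^ m * S j) := by
    intro j hj hlow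
    obtain ⟨k, m, rfl⟩ : ∃ (k : Fin d) (m : ℕ), m * d + k = j :=
      ⟨⟨j % d, Nat.mod_lt j hd⟩, j / d, Nat.div_add_mod' j d⟩
    refine ⟨k, m, rfl, ?_⟩
    rw [pow_succ, mul_assoc, he, hu.apply_X_pow_mul_sum (by omega) hlow]
  have hlow : ∀ j < N, e j = 0 := by
    intro j hj
    induction j using Nat.strong_induction_on with
    | _ j ih =>
      obtain ⟨k, m, rfl, hkm⟩ := hpair _ hj.le fun i hi ↦ ih i hi (hi.trans hj)
      rw [(hu k).1 _ _ (by rw [add_one_mul]; omega), eq_comm] at hkm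
      exact (mul_eq_zero.mp hkm).resolve_right ((hu k).2 m)
  refine ⟨e, ?_, ?_⟩
  · rw [he, ← sum_range_add_sum_Ico _ (by omega : N ≤ N + d + 2), sum_eq_zero, zero_add]
    intro j hj
    rw [hlow j (mem_range.mp hj), zero_smul]
  · obtain ⟨k, m, hN, hkm⟩ := hpair N le_rfl hlow
    subst hN
    have hne := (hu k).2 (m + 1)
    rw [add_one_mul, add_right_comm, hkm] at hne
    exact left_ne_zero_of_mul hne

end IsDOrthogonal

end DOrthogonal

section Brenke

variable {K : Type*} [Field K] (a b : ℕ → K)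

noncomputable def brenke (n : ℕ) : K[X] := ∑ k ∈ range (n + 1), C (a (n - k) * b k) * X ^ k

theorem coeff_brenke (n k : ℕ) :
    (brenke a b n).coeff k = if k ≤ n then a (n - k) * b k else 0 := by
  simp only [brenke, finsetSum_coeff, coeff_C_mul_X_pow, sum_ite_eq, mem_range, Nat.lt_succ_iff]

theorem natDegree_brenke_le (n : ℕ) : (brenke a b n).natDegree ≤ n :=
  natDegree_le_iff_coeff_eq_zero.mpr fun k hk ↦ by simp [coeff_brenke, hk.not_ge]

variable {a b}

noncomputable def brenkeSequence (ha0 : a 0 ≠ 0) (hb : ∀ k, b k ≠ 0) : Sequence K where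
  elems' := brenke a b
  degree_eq' n := degree_eq_of_le_of_coeff_ne_zero (degree_le_of_natDegree_le
    (natDegree_brenke_le a b n)) (by simp [coeff_brenke, ha0, hb])

/-- `prevRatio b j` is `r_{j-1} = b_{j-1} / b_j`, with `r_{-1} = 0`, so that
`Δ_j = prevRatio b (j + 1) - prevRatio b j` for every `j`. -/
def prevRatio (b : ℕ → K) : ℕ → K
  | 0 => 0
  | j + 1 => b j / b (j + 1)

theorem coeff_X_mul_brenke (hb : ∀ k, b k ≠ 0) (n j : ℕ) :
    (X * brenke a b n).coeff j = prevRatio b j * (brenke a b (n + 1)).coeff j := by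
  cases j with
  | zero => simp [prevRatio]
  | succ j =>
    simp only [coeff_X_mul, coeff_brenke, prevRatio, add_le_add_iff_right, Nat.add_sub_add_right]
    split_ifs
    · field_simp [hb (j + 1)]
    · simp

theorem brenke_coeff_relations (ha0 : a 0 = 1) (hb : ∀ k, b k ≠ 0) (m : ℕ) {e : ℕ → K}
    (h : X * brenke a b (m + 3) = ∑ j ∈ Ico (m + 1) (m + 5), e j • brenke a b j) :
    e (m + 4) = prevRatio b (m + 4) ∧
    a 1 * prevRatio b (m + 3) = a 1 * e (m + 4) + e (m + 3) ∧
    a 2 * prevRatio b (m + 2) = a 2 * e (m + 4) + a 1 * e (m + 3) + e (m + 2) ∧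
    a 3 * prevRatio b (m + 1) = a 3 * e (m + 4) + a 2 * e (m + 3) + a 1 * e (m + 2) + e (m + 1) ∧
    a 4 * prevRatio b m =
      a 4 * e (m + 4) + a 3 * e (m + 3) + a 2 * e (m + 2) + a 1 * e (m + 1) := by
  have hc (i : ℕ) : prevRatio b i * (brenke a b (m + 4)).coeff i =
      ∑ j ∈ Ico (m + 1) (m + 5), e j * (brenke a b j).coeff i := by
    rw [← coeff_X_mul_brenke hb, h, finsetSum_coeff]
    simp only [coeff_smul, smul_eq_mul]
  have h4 := hc (m + 4)
  have h3 := hc (m + 3)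
  have h2 := hc (m + 2)
  have h1 := hc (m + 1)
  have h0 := hc m
  simp only [coeff_brenke, le_refl, ↓reduceIte, tsub_self, ha0, one_mul, mul_ite, mul_zero,
    add_le_add_iff_left, Nat.one_le_ofNat, sum_Ico_succ_top, Nat.Ico_succ_singleton,
    sum_singleton, Nat.not_ofNat_le_one, Nat.reduceLeDiff, add_zero, zero_add, Nat.reduceSubDiff,
    add_tsub_cancel_left, Order.add_one_le_iff, lt_add_iff_pos_right, Order.lt_one_iff,
    Order.lt_two_iff, zero_le, Nat.ofNat_pos, le_add_iff_nonneg_right] at h4 h3 h2 h1 h0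
  exact ⟨mul_right_cancel₀ (hb (m + 4)) (by linear_combination -h4),
    mul_right_cancel₀ (hb (m + 3)) (by linear_combination h3),
    mul_right_cancel₀ (hb (m + 2)) (by linear_combination h2),
    mul_right_cancel₀ (hb (m + 1)) (by linear_combination h1),
    mul_right_cancel₀ (hb m) (by linear_combination h0)⟩

end Brenke

theorem brenke_two_orthogonal_recurrence_and_regularity_general
    (a b : ℕ → ℂ) (ha0 : a 0 = 1) (hb : ∀ k, b k ≠ 0)
    (P : ℕ → Polynomial ℂ)
    (hP : ∀ n, P n = ∑ k ∈ Finset.range (n + 1), Polynomial.C (a (n - k) * b k) * X ^ k)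
    (horth : ∃ u : Fin 2 → (Polynomial ℂ →ₗ[ℂ] ℂ),
      ∀ k : Fin 2,
        (∀ m n : ℕ, n > m * 2 + (k : ℕ) → u k (X ^ m * P n) = 0) ∧
        (∀ m : ℕ, u k (X ^ m * P (m * 2 + (k : ℕ))) ≠ 0))
    (r : ℕ → ℂ) (hr : ∀ n, r n = b n / b (n + 1))
    (Δ : ℕ → ℂ) (hΔ0 : Δ 0 = r 0) (hΔ : ∀ n, Δ (n + 1) = r (n + 1) - r n) :
    ∀ n, 3 ≤ n →
      ((-(a 1) ^ 4 - 2 * a 1 * a 3 + 3 * (a 1) ^ 2 * a 2 - (a 2) ^ 2 + a 4) * Δ n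
        + ((a 1) ^ 2 * a 2 - (a 2) ^ 2 - a 1 * a 3 + a 4) * Δ (n - 1)
        + (a 4 - a 1 * a 3) * Δ (n - 2)
        + a 4 * Δ (n - 3) = 0)
      ∧ (((a 1) ^ 3 - 2 * a 1 * a 2 + a 3) * Δ n
        + (a 3 - a 1 * a 2) * Δ (n - 1)
        + a 3 * Δ (n - 2) ≠ 0) := by
  obtain rfl : P = brenke a b := funext hP
  obtain ⟨u, hu⟩ := horth
  have hΔR (j : ℕ) : Δ j = prevRatio b (j + 1) - prevRatio b j := by
    cases j <;> simp [prevRatio, hΔ0, hΔ, hr]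
  intro n hn
  obtain ⟨m, rfl⟩ := Nat.exists_eq_add_of_le' hn
  obtain ⟨e, hrec, he⟩ := IsDOrthogonal.exists_X_mul_eq_sum
    (S := brenkeSequence (ha0 ▸ one_ne_zero) hb) hu two_pos (m + 1)
  obtain ⟨h4, h3, h2, h1, h0⟩ := brenke_coeff_relations ha0 hb m hrec
  simp only [Nat.add_sub_cancel_right, Nat.reduceSubDiff, hΔR, add_assoc, Nat.reduceAdd]
  constructor
  · linear_combination -h0 + a 1 * h1 - (a 1 ^ 2 - a 2) * h2
      - (2 * a 1 * a 2 - a 3 - a 1 ^ 3) * h3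
      + (a 1 ^ 4 + 2 * a 1 * a 3 - a 4 - 3 * a 1 ^ 2 * a 2 + a 2 ^ 2) * h4
  · intro h
    apply he
    linear_combination -h + (2 * a 1 * a 2 - a 3 - a 1 ^ 3) * h4 - (a 1 ^ 2 - a 2) * h3
      + a 1 * h2 - h1

/-- For a 2-orthogonal Brenke polynomial sequence, for every `n ≥ 3`,
`(−a₁⁴−2a₁a₃+3a₁²a₂−a₂²+a₄)Δₙ + (a₁²a₂−a₂²−a₁a₃+a₄)Δₙ₋₁ + (a₄−a₁a₃)Δₙ₋₂ + a₄Δₙ₋₃ = 0`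
and `(a₁³−2a₁a₂+a₃)Δₙ + (a₃−a₁a₂)Δₙ₋₁ + a₃Δₙ₋₂ ≠ 0`. -/
theorem brenke_two_orthogonal_recurrence_and_regularity
    (a b : ℕ → ℂ) (ha0 : a 0 = 1) (hb0 : b 0 = 1) (hb : ∀ k, b k ≠ 0)
    (P : ℕ → Polynomial ℂ)
    (hP : ∀ n, P n = ∑ k ∈ Finset.range (n + 1), Polynomial.C (a (n - k) * b k) * X ^ k)
    (horth : ∃ u : Fin 2 → (Polynomial ℂ →ₗ[ℂ] ℂ),
      ∀ k : Fin 2,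
        (∀ m n : ℕ, n > m * 2 + (k : ℕ) → u k (X ^ m * P n) = 0) ∧
        (∀ m : ℕ, u k (X ^ m * P (m * 2 + (k : ℕ))) ≠ 0))
    (r : ℕ → ℂ) (hr : ∀ n, r n = b n / b (n + 1))
    (Δ : ℕ → ℂ) (hΔ0 : Δ 0 = r 0) (hΔ : ∀ n, Δ (n + 1) = r (n + 1) - r n) :
    ∀ n, 3 ≤ n →
      ((-(a 1) ^ 4 - 2 * a 1 * a 3 + 3 * (a 1) ^ 2 * a 2 - (a 2) ^ 2 + a 4) * Δ n
        + ((a 1) ^ 2 * a 2 - (a 2) ^ 2 - a 1 * a 3 + a 4) * Δ (n - 1)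
        + (a 4 - a 1 * a 3) * Δ (n - 2)
        + a 4 * Δ (n - 3) = 0)
      ∧ (((a 1) ^ 3 - 2 * a 1 * a 2 + a 3) * Δ n
        + (a 3 - a 1 * a 2) * Δ (n - 1)
        + a 3 * Δ (n - 2) ≠ 0) :=
  brenke_two_orthogonal_recurrence_and_regularity_general a b ha0 hb P hP horth r hr Δ hΔ0 hΔ
end

section
/- Let {P_n} be the Brenke polynomial sequence associated with (a_k) and (b_k), and let m ≥ 1 be an integer. Then {P_n} is (m+1)-fold symmetric (P_n(w·x) = wⁿ·P_n(x) for all n ≥ 0 and all x ∈ ℂ, where w = exp(2πi/(m+1))) if and only if a_k = 0 for every index k that is not divisible by m+1. -/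
/-!
Since `P_n(0) = a_n b_0`, evaluating the symmetry relation at `x = 0` gives `a_n = wⁿ a_n`,
so `a_n = 0` unless `wⁿ = 1`. Conversely, if `a_j ≠ 0` only when `wʲ = 1`, each surviving
monomial `a_{n-k} b_k xᵏ` of `P_n` is multiplied by `wᵏ = wⁿ` under `x ↦ w x`.
For a primitive `(m+1)`-th root of unity, `wᵏ = 1` means exactly `(m+1) ∣ k`.
-/

open Finset Polynomial Complex

section CommSemiring

variable {R : Type*} [CommSemiring R]

noncomputable def brenkePoly (a b : ℕ → R) (n : ℕ) : R[X] :=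
  ∑ k ∈ range (n + 1), C (a (n - k) * b k) * X ^ k

def IsFoldSymmetric (ζ : R) (P : ℕ → R[X]) : Prop :=
  ∀ n x, (P n).eval (ζ * x) = ζ ^ n * (P n).eval x

theorem brenkePoly_eval_zero (a b : ℕ → R) (n : ℕ) : (brenkePoly a b n).eval 0 = a n * b 0 := by
  rw [brenkePoly, eval_finsetSum, sum_eq_single 0]
  · simp
  · intro k _ hk
    simp [zero_pow hk]
  · simp

theorem brenkePoly_eval_mul (a b : ℕ → R) {ζ : R} (ha : ∀ k, ζ ^ k ≠ 1 → a k = 0)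
    (n : ℕ) (x : R) :
    (brenkePoly a b n).eval (ζ * x) = ζ ^ n * (brenkePoly a b n).eval x := by
  simp only [brenkePoly, eval_finsetSum, eval_mul, eval_pow, eval_C, eval_X, mul_sum]
  refine sum_congr rfl fun k hk => ?_
  have hkn : k ≤ n := Nat.lt_succ_iff.mp (mem_range.mp hk)
  by_cases hζ : ζ ^ (n - k) = 1
  · have hζn : ζ ^ n = ζ ^ k := by rw [← Nat.sub_add_cancel hkn, pow_add, hζ, one_mul]
    rw [mul_pow, hζn]
    ring
  · rw [ha _ hζ]
    ring

end CommSemiring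

section CommRing

variable {R : Type*} [CommRing R] [NoZeroDivisors R]

theorem eq_zero_of_isFoldSymmetric_brenkePoly {a b : ℕ → R} (hb0 : b 0 ≠ 0)
    {ζ : R} (h : IsFoldSymmetric ζ (brenkePoly a b)) {k : ℕ} (hk : ζ ^ k ≠ 1) : a k = 0 := by
  have h0 := h k 0
  rw [mul_zero, brenkePoly_eval_zero] at h0
  have hab : (ζ ^ k - 1) * (a k * b 0) = 0 := by linear_combination -h0
  have hakb : a k * b 0 = 0 := (mul_eq_zero.mp hab).resolve_left (sub_ne_zero.mpr hk)
  exact (mul_eq_zero.mp hakb).resolve_right hb0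

theorem isFoldSymmetric_brenkePoly_iff (a : ℕ → R) {b : ℕ → R} (hb0 : b 0 ≠ 0)
    (ζ : R) : IsFoldSymmetric ζ (brenkePoly a b) ↔ ∀ k, ζ ^ k ≠ 1 → a k = 0 :=
  ⟨fun h _ => eq_zero_of_isFoldSymmetric_brenkePoly hb0 h, brenkePoly_eval_mul a b⟩

end CommRing

theorem brenke_fold_symmetric_iff_coeffs_vanish_general
    (a b : ℕ → ℂ) (hb : ∀ k, b k ≠ 0)
    (P : ℕ → Polynomial ℂ)
    (hP : ∀ n, P n = ∑ k ∈ Finset.range (n + 1), Polynomial.C (a (n - k) * b k) * X ^ k)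
    (m : ℕ)
    (w : ℂ) (hw : w = Complex.exp (2 * Real.pi * Complex.I / (m + 1))) :
    (∀ (n : ℕ) (x : ℂ), (P n).eval (w * x) = w ^ n * (P n).eval x)
      ↔ (∀ k : ℕ, ¬ (m + 1) ∣ k → a k = 0) := by
  have hprim : IsPrimitiveRoot w (m + 1) := by
    rw [hw]
    exact_mod_cast Complex.isPrimitiveRoot_exp (m + 1) m.succ_ne_zero
  obtain rfl : P = brenkePoly a b := funext hP
  simp_rw [← hprim.pow_eq_one_iff_dvd]
  exact isFoldSymmetric_brenkePoly_iff a (hb 0) w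

/-- A Brenke polynomial sequence is `(m+1)`-fold symmetric if and only if
`a_k = 0` for every index `k` not divisible by `m+1`. -/
theorem brenke_fold_symmetric_iff_coeffs_vanish
    (a b : ℕ → ℂ) (ha0 : a 0 = 1) (hb0 : b 0 = 1) (hb : ∀ k, b k ≠ 0)
    (P : ℕ → Polynomial ℂ)
    (hP : ∀ n, P n = ∑ k ∈ Finset.range (n + 1), Polynomial.C (a (n - k) * b k) * X ^ k)
    (m : ℕ) (hm : 1 ≤ m)
    (w : ℂ) (hw : w = Complex.exp (2 * Real.pi * Complex.I / (m + 1))) :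
    (∀ (n : ℕ) (x : ℂ), (P n).eval (w * x) = w ^ n * (P n).eval x)
      ↔ (∀ k : ℕ, ¬ (m + 1) ∣ k → a k = 0) :=
  brenke_fold_symmetric_iff_coeffs_vanish_general a b hb P hP m w hw
end

section
/- Let q, a_1 ∈ ℂ with q ≠ 0 and qⁿ ≠ 1 for every n ≥ 1, and let j = exp(2πi/3). Let a : ℕ → ℂ with a_0 = 1 (and with the convention a_m = 0 for m < 0) satisfy, for every n ≥ 1 and every x ∈ {q, jq, j̄q}, the recurrence a_n = x^{n−2}·( x²·a_n + a_1(x − x²)·a_{n−1} + a_1²(1−x)·a_{n−2} − a_1³·a_{n−3} ). Then for all n ≥ 0: a_{3n+2} = a_1·a_{3n+1}, a_{3n+1} = a_1·a_{3n}, and a_{3n} = (−1)ⁿ·q^{3n(n+1)/2}·a_1^{3n} / ∏_{k=1}^{n}(1 − q^{3k}). -/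
open Complex Finset

/-!
Write the recurrence at `x` as `a n = c₀ x^(n-2) + c₁ x^(n-1) + c₂ x^n` with
`c₂ = a n - a₁ a (n-1)`. It holds at `x = ζq` for the three cube roots of unity `ζ`;
multiplying by `ζ^(-n)` and summing over `ζ` kills the `c₀` and `c₁` terms and leaves
`3 qⁿ c₂ = (∑ ζ^(-n)) a n`, which is `3 a n` or `0` according as `3 ∣ n`. So
`a n = a₁ a (n-1)` when `3 ∤ n`, while `(1 - q^(3m)) a (3m) = -a₁ q^(3m) a (3m-1)`
`= -a₁³ q^(3m) a (3m-3)`, which telescopes into the product formula.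
-/

theorem one_add_add_sq_eq_zero_of_pow_three {R : Type*} [CommRing R] [NoZeroDivisors R] {z : R}
    (h3 : z ^ 3 = 1) (h1 : z ≠ 1) : 1 + z + z ^ 2 = 0 := by
  have : (z - 1) * (1 + z + z ^ 2) = 0 := by linear_combination h3
  exact (mul_eq_zero.1 this).resolve_left (sub_ne_zero.2 h1)

theorem mul_prod_one_sub_pow_eq {R : Type*} [CommRing R] {b : ℕ → R} {c r : R}
    (h : ∀ m, b (m + 1) * (1 - r ^ (m + 1)) = c * r ^ (m + 1) * b m) (m : ℕ) :
    b m * ∏ k ∈ range m, (1 - r ^ (k + 1)) = c ^ m * r ^ (m * (m + 1) / 2) * b 0 := by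
  induction m with
  | zero => simp
  | succ m ih =>
    have htri : (m + 1) * (m + 1 + 1) / 2 = m * (m + 1) / 2 + (m + 1) := by
      rw [show (m + 1) * (m + 1 + 1) = m * (m + 1) + 2 * (m + 1) by ring,
        Nat.add_mul_div_left _ _ two_pos]
    rw [prod_range_succ, htri, pow_add, pow_succ]
    linear_combination (∏ k ∈ range m, (1 - r ^ (k + 1))) * h m + c * r ^ (m + 1) * ih

section CubeRoots

variable {K : Type*} [Field K]

theorem IsPrimitiveRoot.one_add_zpow_add_sq_zpow {ω : K} (hω : IsPrimitiveRoot ω 3) (k : ℤ) :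
    1 + ω ^ k + (ω ^ 2) ^ k = if (3 : ℤ) ∣ k then 3 else 0 := by
  have hsq : (ω ^ 2) ^ k = (ω ^ k) ^ 2 := by
    rw [← zpow_natCast, zpow_comm, zpow_natCast]
  rw [hsq]
  split_ifs with hk
  · rw [(hω.zpow_eq_one_iff_dvd k).2 (by exact_mod_cast hk)]
    norm_num
  · refine one_add_add_sq_eq_zero_of_pow_three ?_ fun h ↦ hk ?_
    · rw [← zpow_natCast, zpow_comm, zpow_natCast, hω.pow_eq_one, one_zpow]
    · exact_mod_cast (hω.zpow_eq_one_iff_dvd k).1 h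

theorem zpow_neg_mul_mul_zpow_sub_two {ζ : K} (hζ : ζ ^ 3 = 1) (q : K) (n : ℤ) :
    ζ ^ (-n) * (ζ * q) ^ (n - 2) = ζ * q ^ (n - 2) := by
  have hζ0 : ζ ≠ 0 := by rintro rfl; norm_num at hζ
  rw [mul_zpow, ← mul_assoc, ← zpow_add₀ hζ0, show -n + (n - 2) = -2 by ring, zpow_neg,
    zpow_ofNat, inv_eq_of_mul_eq_one_right (by linear_combination hζ : ζ ^ 2 * ζ = 1)]

theorem IsPrimitiveRoot.zpow_mul_coeff_two_eq_ite {ω q s c₀ c₁ c₂ : K}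
    (hω : IsPrimitiveRoot ω 3) (hq : q ≠ 0) (n : ℤ)
    (h : ∀ x ∈ ({q, ω * q, ω ^ 2 * q} : Set K),
      s = x ^ (n - 2) * (c₀ + c₁ * x + c₂ * x ^ 2)) :
    q ^ n * c₂ = if (3 : ℤ) ∣ n then s else 0 := by
  have twisted : ∀ ζ : K, ζ ^ 3 = 1 → (ζ * q) ∈ ({q, ω * q, ω ^ 2 * q} : Set K) →
      ζ ^ (-n) * s = q ^ (n - 2) * (ζ * c₀ + ζ ^ 2 * q * c₁ + q ^ 2 * c₂) := by
    intro ζ hζ hx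
    rw [h _ hx, ← mul_assoc, zpow_neg_mul_mul_zpow_sub_two hζ]
    linear_combination q ^ (n - 2) * q ^ 2 * c₂ * hζ
  have at_one := twisted 1 (one_pow 3) (by simp)
  have at_ω := twisted ω hω.pow_eq_one (by simp)
  have at_ω_sq := twisted (ω ^ 2)
    (by rw [← pow_mul, mul_comm, pow_mul, hω.pow_eq_one, one_pow]) (by simp)
  have hqn : q ^ (n - 2) * q ^ 2 = q ^ n := by
    rw [← zpow_natCast, ← zpow_add₀ hq]; norm_num
  have hω3 := hω.pow_eq_one
  have hsq := one_add_add_sq_eq_zero_of_pow_three hω3 (hω.ne_one (by norm_num))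
  rw [one_zpow, one_mul] at at_one
  have : s * (1 + ω ^ (-n) + (ω ^ 2) ^ (-n)) = 3 * (q ^ n * c₂) := by
    rw [← hqn]
    linear_combination at_one + at_ω + at_ω_sq + q ^ (n - 2) * (c₀ + q * c₁) * hsq
      + q ^ (n - 2) * q * c₁ * ω * hω3
  have h3 : (3 : K) ≠ 0 := by exact_mod_cast hω.neZero'.out
  simp only [hω.one_add_zpow_add_sq_zpow, Int.dvd_neg] at this
  split_ifs at this ⊢ <;> exact mul_left_cancel₀ h3 (by linear_combination -this)

def RecurrenceAt (q ω a1 : K) (a : ℤ → K) (n : ℤ) : Prop :=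
  ∀ x ∈ ({q, ω * q, ω ^ 2 * q} : Set K),
    a n = x ^ (n - 2) * (x ^ 2 * a n + a1 * (x - x ^ 2) * a (n - 1)
      + a1 ^ 2 * (1 - x) * a (n - 2) - a1 ^ 3 * a (n - 3))

variable {q ω a1 : K} {a : ℤ → K}

theorem RecurrenceAt.zpow_mul_sub_eq_ite (hω : IsPrimitiveRoot ω 3) (hq : q ≠ 0) {n : ℤ}
    (h : RecurrenceAt q ω a1 a n) :
    q ^ n * (a n - a1 * a (n - 1)) = if (3 : ℤ) ∣ n then a n else 0 :=
  hω.zpow_mul_coeff_two_eq_ite (c₀ := a1 ^ 2 * a (n - 2) - a1 ^ 3 * a (n - 3))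
    (c₁ := a1 * a (n - 1) - a1 ^ 2 * a (n - 2)) hq n fun x hx ↦ (h x hx).trans (by ring)

theorem RecurrenceAt.eq_mul_of_not_dvd (hω : IsPrimitiveRoot ω 3) (hq : q ≠ 0) {n : ℤ}
    (h : RecurrenceAt q ω a1 a n) (h3 : ¬ (3 : ℤ) ∣ n) : a n = a1 * a (n - 1) := by
  have := h.zpow_mul_sub_eq_ite hω hq
  rw [if_neg h3] at this
  exact sub_eq_zero.1 ((mul_eq_zero.1 this).resolve_left (zpow_ne_zero n hq))

theorem apply_three_mul_add_one (hω : IsPrimitiveRoot ω 3) (hq : q ≠ 0)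
    (hrec : ∀ n : ℤ, 1 ≤ n → RecurrenceAt q ω a1 a n) (m : ℕ) :
    a (3 * m + 1) = a1 * a (3 * m) := by
  simpa using (hrec (3 * m + 1) (by omega)).eq_mul_of_not_dvd hω hq (by omega)

theorem apply_three_mul_add_two (hω : IsPrimitiveRoot ω 3) (hq : q ≠ 0)
    (hrec : ∀ n : ℤ, 1 ≤ n → RecurrenceAt q ω a1 a n) (m : ℕ) :
    a (3 * m + 2) = a1 * a (3 * m + 1) := by
  convert (hrec (3 * m + 2) (by omega)).eq_mul_of_not_dvd hω hq (by omega) using 3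
  ring

theorem apply_three_mul_succ_mul (hω : IsPrimitiveRoot ω 3) (hq : q ≠ 0)
    (hrec : ∀ n : ℤ, 1 ≤ n → RecurrenceAt q ω a1 a n) (m : ℕ) :
    a (3 * ((m + 1 : ℕ) : ℤ)) * (1 - (q ^ 3) ^ (m + 1))
      = -a1 ^ 3 * (q ^ 3) ^ (m + 1) * a (3 * m) := by
  have := (hrec (3 * ((m + 1 : ℕ) : ℤ)) (by omega)).zpow_mul_sub_eq_ite hω hq
  have hpow : q ^ (3 * ((m + 1 : ℕ) : ℤ)) = (q ^ 3) ^ (m + 1) := by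
    rw [← pow_mul]; exact_mod_cast zpow_natCast q (3 * (m + 1))
  rw [if_pos (dvd_mul_right _ _), show 3 * ((m + 1 : ℕ) : ℤ) - 1 = 3 * m + 2 by push_cast; ring,
    apply_three_mul_add_two hω hq hrec, apply_three_mul_add_one hω hq hrec, hpow] at this
  linear_combination -this

end CubeRoots

theorem recurrence_solution_case_a2_a1sq_general
    (q a1 : ℂ) (hq : q ≠ 0) (hqn : ∀ n : ℕ, 1 ≤ n → q ^ n ≠ 1)
    (j : ℂ) (hj : j = Complex.exp (2 * Real.pi * Complex.I / 3))
    (a : ℤ → ℂ) (ha0 : a 0 = 1)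
    (hrec : ∀ n : ℤ, 1 ≤ n → ∀ x ∈ ({q, j * q, j ^ 2 * q} : Set ℂ),
      a n = x ^ (n - 2) * (x ^ 2 * a n + a1 * (x - x ^ 2) * a (n - 1)
        + a1 ^ 2 * (1 - x) * a (n - 2) - a1 ^ 3 * a (n - 3))) :
    ∀ n : ℕ,
      a (3 * (n : ℤ) + 2) = a1 * a (3 * (n : ℤ) + 1) ∧
      a (3 * (n : ℤ) + 1) = a1 * a (3 * (n : ℤ)) ∧
      a (3 * (n : ℤ)) = (-1) ^ n * q ^ (3 * n * (n + 1) / 2) * a1 ^ (3 * n)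
        / ∏ k ∈ Finset.range n, (1 - q ^ (3 * (k + 1))) := by
  have hj3 : IsPrimitiveRoot j 3 := by
    rw [hj]; exact_mod_cast Complex.isPrimitiveRoot_exp 3 (by norm_num)
  intro n
  refine ⟨apply_three_mul_add_two hj3 hq hrec n, apply_three_mul_add_one hj3 hq hrec n, ?_⟩
  have hprod : ∏ k ∈ range n, (1 - q ^ (3 * (k + 1))) ≠ 0 :=
    prod_ne_zero_iff.2 fun k _ ↦ sub_ne_zero.2 (hqn _ (by omega)).symm
  have := mul_prod_one_sub_pow_eq (b := fun m ↦ a (3 * (m : ℤ)))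
    (apply_three_mul_succ_mul hj3 hq hrec) n
  simp only [← pow_mul, Nat.cast_zero, mul_zero, ha0, mul_one] at this
  rw [eq_div_iff hprod, this, mul_assoc 3 n,
    Nat.mul_div_assoc 3 (Nat.even_mul_succ_self n).two_dvd, neg_pow, pow_mul]
  ring

/-- Solution of the recurrence
`aₙ = x^{n−2}(x²aₙ + a₁(x−x²)aₙ₋₁ + a₁²(1−x)aₙ₋₂ − a₁³aₙ₋₃)` for `x ∈ {q, jq, j̄q}`. -/
theorem recurrence_solution_case_a2_a1sq
    (q a1 : ℂ) (hq : q ≠ 0) (hqn : ∀ n : ℕ, 1 ≤ n → q ^ n ≠ 1)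
    (j : ℂ) (hj : j = Complex.exp (2 * Real.pi * Complex.I / 3))
    (a : ℤ → ℂ) (ha0 : a 0 = 1) (haneg : ∀ m : ℤ, m < 0 → a m = 0)
    (hrec : ∀ n : ℤ, 1 ≤ n → ∀ x ∈ ({q, j * q, j ^ 2 * q} : Set ℂ),
      a n = x ^ (n - 2) * (x ^ 2 * a n + a1 * (x - x ^ 2) * a (n - 1)
        + a1 ^ 2 * (1 - x) * a (n - 2) - a1 ^ 3 * a (n - 3))) :
    ∀ n : ℕ,
      a (3 * (n : ℤ) + 2) = a1 * a (3 * (n : ℤ) + 1) ∧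
      a (3 * (n : ℤ) + 1) = a1 * a (3 * (n : ℤ)) ∧
      a (3 * (n : ℤ)) = (-1) ^ n * q ^ (3 * n * (n + 1) / 2) * a1 ^ (3 * n)
        / ∏ k ∈ Finset.range n, (1 - q ^ (3 * (k + 1))) :=
  recurrence_solution_case_a2_a1sq_general q a1 hq hqn j hj a ha0 hrec
end
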